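/- Let α ≥ 0, k a positive integer, and p a real polynomial with p(0) ≠ 0. Let Λ(q) = x·q'' + (α+1)·q' and P_h(x) = exp(-hΛ)(x^k p(x)). Then P_h(εh)/h^k is a polynomial in h whose value at h = 0 equals p(0)·(-1)^k k! L_k^α(ε). -/

import Mathlib

/-! The dilation `x ↦ h x` intertwines the operators: `Λ (r(h·)) = h · (Λ r)(h·)`, hence
`(exp(-hΛ) r)(h x) = (exp(-Λ) (r(h·)))(x)`. For `r = x^k p` this gives
`P_h(εh) / h^k = exp(-Λ)(x^k p(h·))(ε) = ∑_m p_m h^m exp(-Λ)(x^(k+m))(ε)`, a polynomial in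
`h` whose constant term is `p(0) exp(-Λ)(x^k)(ε)`. Finally `Λ^j x^k` is `x^(k-j)` times a
product of two rising factorials, which are the Gamma quotients in the coefficients of `L_k^α`. -/

open Polynomial

/-- The operator Λ = x·d²/dx² + (α+1)·d/dx on real polynomials. -/
noncomputable def Lam (α : ℝ) (q : ℝ[X]) : ℝ[X] :=
  X * derivative (derivative q) + C (α + 1) * derivative q

/-- The (finite) operator exponential `exp(-hΛ)q = ∑_{j=0}^{deg q} (-h)^j Λ^j(q)/j!`. -/
noncomputable def expL (α h : ℝ) (q : ℝ[X]) : ℝ[X] :=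
  ∑ j ∈ Finset.range (q.natDegree + 1),
    C ((-h) ^ j / (Nat.factorial j)) * (Lam α)^[j] q

/-- The generalized Laguerre polynomial
`L_k^α(x) = ∑_{i=0}^k (-1)^i (Γ(k+α+1)/(Γ(α+i+1)(k-i)!)) x^i / i!`. -/
noncomputable def lag (α : ℝ) (k : ℕ) : ℝ[X] :=
  ∑ i ∈ Finset.range (k + 1),
    C ((-1 : ℝ) ^ i * (Real.Gamma ((k : ℝ) + α + 1) /
        (Real.Gamma (α + i + 1) * (Nat.factorial (k - i)))) / (Nat.factorial i)) * X ^ i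

namespace Real

theorem Gamma_add_nat_eq_ascPochhammer_mul {x : ℝ} (hx : 0 < x) (n : ℕ) :
    Gamma (x + n) = (ascPochhammer ℝ n).eval x * Gamma x := by
  induction n with
  | zero => simp
  | succ n ih =>
    rw [Nat.cast_succ, ← add_assoc, Gamma_add_one (by positivity), ih, ascPochhammer_succ_eval]
    ring

end Real

theorem X_pow_mul_comp_C_mul_X {R : Type*} [CommSemiring R] (k : ℕ) (p : R[X]) (a : R) :
    (X ^ k * p).comp (C a * X) =
      a ^ k • ∑ m ∈ Finset.range (p.natDegree + 1), (p.coeff m * a ^ m) • X ^ (k + m) := by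
  rw [mul_comp, X_pow_comp, comp, eval₂_eq_sum_range, Finset.smul_sum, Finset.mul_sum]
  refine Finset.sum_congr rfl fun m _ => ?_
  simp only [smul_eq_C_mul, mul_pow, C_mul, C_pow, pow_add]
  ring

section Lam

variable (α : ℝ)

theorem coeff_Lam (r : ℝ[X]) (m : ℕ) :
    (Lam α r).coeff m = ((m : ℝ) + 1) * ((m : ℝ) + α + 1) * r.coeff (m + 1) := by
  simp only [Lam, coeff_add, coeff_C_mul, coeff_derivative]
  cases m with
  | zero => simp
  | succ n => simp only [coeff_X_mul, coeff_derivative]; push_cast; ring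

theorem coeff_iterate_Lam (j : ℕ) (r : ℝ[X]) (m : ℕ) :
    ((Lam α)^[j] r).coeff m = (ascPochhammer ℝ j).eval ((m : ℝ) + 1) *
      (ascPochhammer ℝ j).eval ((m : ℝ) + α + 1) * r.coeff (m + j) := by
  induction j generalizing r with
  | zero => simp
  | succ j ih =>
    rw [Function.iterate_succ_apply, ih, coeff_Lam, ascPochhammer_succ_eval,
      ascPochhammer_succ_eval, ← add_assoc]
    push_cast
    ring

theorem iterate_Lam_eq_zero {j : ℕ} {r : ℝ[X]} (hj : r.natDegree < j) : (Lam α)^[j] r = 0 := by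
  ext m
  rw [coeff_iterate_Lam, coeff_eq_zero_of_natDegree_lt (by omega), mul_zero, coeff_zero]

noncomputable def lamLinearMap : Module.End ℝ ℝ[X] where
  toFun := Lam α
  map_add' r s := by simp only [Lam, derivative_add]; ring
  map_smul' c r := by simp only [Lam, smul_eq_C_mul, derivative_C_mul, RingHom.id_apply]; ring

theorem iterate_Lam_eq_pow (j : ℕ) : (Lam α)^[j] = ⇑(lamLinearMap α ^ j) := by
  rw [Module.End.coe_pow]; rfl

end Lam

section expL

variable (α h : ℝ)

theorem expL_eq_sum_range {r : ℝ[X]} {M : ℕ} (hM : r.natDegree < M) :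
    expL α h r = ∑ j ∈ Finset.range M, C ((-h) ^ j / j.factorial) * (Lam α)^[j] r := by
  refine Finset.sum_subset (Finset.range_subset_range.mpr hM) fun j _ hj => ?_
  rw [iterate_Lam_eq_zero α (by simpa using hj), mul_zero]

noncomputable def expLLinearMap : Module.End ℝ ℝ[X] where
  toFun := expL α h
  map_add' r s := by
    have hM : (r + s).natDegree < r.natDegree + s.natDegree + 1 :=
      (natDegree_add_le r s).trans_lt (by omega)
    rw [expL_eq_sum_range α h hM, expL_eq_sum_range α h (M := r.natDegree + s.natDegree + 1)
      (by omega), expL_eq_sum_range α h (M := r.natDegree + s.natDegree + 1) (by omega),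
      ← Finset.sum_add_distrib]
    simp only [iterate_Lam_eq_pow, map_add, mul_add]
  map_smul' c r := by
    rw [expL_eq_sum_range α h ((natDegree_smul_le c r).trans_lt r.natDegree.lt_succ_self),
      expL, Finset.smul_sum]
    refine Finset.sum_congr rfl fun j _ => ?_
    rw [iterate_Lam_eq_pow, map_smul, mul_smul_comm, RingHom.id_apply]

@[simp]
theorem expLLinearMap_apply (r : ℝ[X]) : expLLinearMap α h r = expL α h r := rfl

theorem expL_comp_C_mul_X (r : ℝ[X]) :
    (expL α h r).comp (C h * X) = expL α 1 (r.comp (C h * X)) := by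
  have hdeg : (r.comp (C h * X)).natDegree < r.natDegree + 1 :=
    Nat.lt_succ_of_le <| natDegree_le_iff_coeff_eq_zero.mpr fun m hm => by
      rw [comp_C_mul_X_coeff, coeff_eq_zero_of_natDegree_lt hm, zero_mul]
  rw [expL_eq_sum_range α 1 hdeg, expL]
  ext i
  simp only [comp_C_mul_X_coeff, finsetSum_coeff, coeff_C_mul, coeff_iterate_Lam,
    Finset.sum_mul]
  refine Finset.sum_congr rfl fun j _ => ?_
  ring

theorem expL_one_X_pow_eq_lag (hα : -1 < α) (n : ℕ) :
    expL α 1 (X ^ n) = C ((-1 : ℝ) ^ n * n.factorial) * lag α n := by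
  ext i
  simp only [expL, natDegree_X_pow, lag, finsetSum_coeff, coeff_C_mul, coeff_iterate_Lam,
    coeff_X_pow, mul_ite, mul_one, mul_zero, Finset.sum_ite_eq, Finset.mem_range]
  by_cases hi : i ≤ n
  · obtain ⟨j, rfl⟩ := Nat.exists_eq_add_of_le hi
    rw [Finset.sum_eq_single j (fun l _ hl => if_neg (by omega)) (by simp), if_pos rfl,
      if_pos (by omega), Nat.add_sub_cancel_left]
    have hfac := Real.Gamma_add_nat_eq_ascPochhammer_mul (x := i + 1) (by positivity) j
    have hGamma := Real.Gamma_add_nat_eq_ascPochhammer_mul (x := i + α + 1) (by linarith) j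
    rw [show (i : ℝ) + 1 + j = ((i + j : ℕ) : ℝ) + 1 by push_cast; ring,
      Real.Gamma_nat_eq_factorial, Real.Gamma_nat_eq_factorial] at hfac
    rw [show (i : ℝ) + α + 1 + j = ((i + j : ℕ) : ℝ) + α + 1 by push_cast; ring] at hGamma
    have hGpos : 0 < Real.Gamma ((i : ℝ) + α + 1) := Real.Gamma_pos_of_pos (by linarith)
    have hsign : (-1 : ℝ) ^ (i + j) * (-1) ^ i = (-1) ^ j := by
      rw [pow_add, mul_right_comm, ← mul_pow]; norm_num
    rw [hfac, hGamma, add_comm α (i : ℝ), ← hsign]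
    field_simp
  · refine (Finset.sum_eq_zero fun j _ => ?_).trans ?_
    · exact if_neg (by omega)
    · rw [if_neg (by omega)]

theorem expL_X_pow_mul_comp_C_mul_X (k : ℕ) (p : ℝ[X]) :
    (expL α h (X ^ k * p)).comp (C h * X) =
      h ^ k • ∑ m ∈ Finset.range (p.natDegree + 1),
        (p.coeff m * h ^ m) • expL α 1 (X ^ (k + m)) := by
  rw [expL_comp_C_mul_X, X_pow_mul_comp_C_mul_X, ← expLLinearMap_apply, map_smul, map_sum]
  simp only [map_smul, expLLinearMap_apply]

end expL

theorem stmt_13_general (α : ℝ) (hα : 0 ≤ α) (k : ℕ)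
    (p : ℝ[X]) :
    ∃ Q : Polynomial ℝ[X],
      (∀ h : ℝ, h ≠ 0 → ∀ ε : ℝ,
        (Q.eval (C h)).eval ε = (expL α h (X ^ k * p)).eval (ε * h) / h ^ k) ∧
      Q.coeff 0 = C (p.eval 0 * (-1 : ℝ) ^ k * (Nat.factorial k)) * lag α k := by
  refine ⟨∑ m ∈ Finset.range (p.natDegree + 1),
    monomial m (p.coeff m • expL α 1 (X ^ (k + m))), fun h hh ε => ?_, ?_⟩
  · have hε : ε * h = (C h * X).eval ε := by rw [eval_mul, eval_C, eval_X, mul_comm]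
    rw [eq_div_iff (pow_ne_zero k hh), hε, ← eval_comp, expL_X_pow_mul_comp_C_mul_X]
    simp only [eval_finsetSum, eval_monomial, eval_smul, eval_mul, eval_pow, eval_C, smul_eq_mul,
      Finset.mul_sum, Finset.sum_mul]
    refine Finset.sum_congr rfl fun m _ => ?_
    ring
  · simp only [finsetSum_coeff, coeff_monomial, Finset.sum_ite_eq', Finset.mem_range,
      Nat.zero_lt_succ, if_true]
    rw [add_zero, expL_one_X_pow_eq_lag α (by linarith), ← coeff_zero_eq_eval_zero,
      smul_eq_C_mul, ← mul_assoc, ← C_mul]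
    ring_nf

/-- `P_h(εh)/h^k` is a polynomial in `h` (with coefficients polynomial in `ε`) whose
value at `h = 0` is `p(0)·(-1)^k k! L_k^α(ε)`. -/
theorem stmt_13 (α : ℝ) (hα : 0 ≤ α) (k : ℕ) (hk : 1 ≤ k)
    (p : ℝ[X]) (hp : p.eval 0 ≠ 0) :
    ∃ Q : Polynomial ℝ[X],
      (∀ h : ℝ, h ≠ 0 → ∀ ε : ℝ,
        (Q.eval (C h)).eval ε = (expL α h (X ^ k * p)).eval (ε * h) / h ^ k) ∧
      Q.coeff 0 = C (p.eval 0 * (-1 : ℝ) ^ k * (Nat.factorial k)) * lag α k :=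
  stmt_13_general α hα k p
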